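/- arXiv:1212.0570 — 5 statements merged into one kernel-verified Lean document; each statement's English description precedes it below -/
import Mathlib

section
/- For every finite set P of points in the plane in general position, the θ₅-graph of P is a connected graph. -/
/-!
Suppose two points of `P` are not joined by a path, and take such a pair `u ≠ v` at minimal
distance. The ten directions `±bᵢ` are `π/5` apart, so one of `v - u`, `u - v`, say `v - u`,
makes an angle `α ≤ π/10` with some `bᵢ`. Then `v ∈ Cᵢᵘ`, and the point `w` that `u` is joined
to in `Cᵢᵘ` makes an angle `β < π/5` with `bᵢ` and has projection on `bᵢ` at most that of `v`.
The cosine rule, together with `cos (α + 2β) > 0`, gives `|w - v| < |u - v|`, and `w` is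
joined to `u`, contradicting minimality.
-/

noncomputable section

/-- The plane ℝ². -/
abbrev Plane : Type := EuclideanSpace ℝ (Fin 2)

/-- The bisector direction of the `i`-th cone: the unit vector obtained by rotating `(0,1)`
clockwise by `i · 2π/5`. -/
noncomputable def coneDir (i : Fin 5) : Plane :=
  WithLp.toLp 2 ![Real.sin ((i : ℕ) * (2 * Real.pi / 5)), Real.cos ((i : ℕ) * (2 * Real.pi / 5))]

/-- The cone `Cᵢᵘ`: all points `p ≠ u` such that the angle between `p - u` and the
bisector direction `coneDir i` is less than `π/5`. -/
def cone (u : Plane) (i : Fin 5) : Set Plane :=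
  {p | p ≠ u ∧ InnerProductGeometry.angle (p - u) (coneDir i) < Real.pi / 5}

/-- A set of points is in general position if no difference of two distinct points makes an
angle that is an integer multiple of `π/5` with either coordinate axis. -/
def GeneralPosition (P : Set Plane) : Prop :=
  ∀ p ∈ P, ∀ q ∈ P, p ≠ q → ∀ k : ℤ,
    (p - q) 0 * Real.cos (k * (Real.pi / 5)) - (p - q) 1 * Real.sin (k * (Real.pi / 5)) ≠ 0 ∧
    (p - q) 0 * Real.sin (k * (Real.pi / 5)) + (p - q) 1 * Real.cos (k * (Real.pi / 5)) ≠ 0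

/-- `v` is the point of `P` in the cone `Cᵢᵘ` that is closest to `u`, where distance is
measured by projection onto the bisector of the cone. -/
def isClosest (P : Set Plane) (u : Plane) (i : Fin 5) (v : Plane) : Prop :=
  v ∈ P ∧ v ∈ cone u i ∧
    ∀ p ∈ P, p ∈ cone u i → (inner ℝ (v - u) (coneDir i) : ℝ) ≤ inner ℝ (p - u) (coneDir i)

/-- The θ₅-graph of a point set `P`: each `u ∈ P` is joined to the closest point of `P`
in each of its five cones. -/
def thetaGraph (P : Set Plane) : SimpleGraph Plane where
  Adj u v := u ∈ P ∧ v ∈ P ∧ u ≠ v ∧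
    ((∃ i, isClosest P u i v) ∨ (∃ i, isClosest P v i u))
  symm := by
    constructor
    rintro u v ⟨hu, hv, hne, h⟩
    exact ⟨hv, hu, hne.symm, h.symm⟩
  loopless := by
    constructor
    rintro u ⟨-, -, hne, -⟩
    exact hne rfl

/-- The Euclidean length of a walk in the θ₅-graph. -/
noncomputable def walkLength {P : Set Plane} {u v : Plane} (p : (thetaGraph P).Walk u v) : ℝ :=
  (p.darts.map fun d => dist d.toProd.1 d.toProd.2).sum

/-- The canonical triangle `T_{u,w}` (for `w ∈ Cᵢᵘ`): the closed triangle bounded by the two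
boundary rays of `Cᵢᵘ` and the line through `w` perpendicular to the bisector of the cone. -/
def canonicalTriangle (u w : Plane) (i : Fin 5) : Set Plane :=
  {p | (p = u ∨ InnerProductGeometry.angle (p - u) (coneDir i) ≤ Real.pi / 5) ∧
       (inner ℝ (p - u) (coneDir i) : ℝ) ≤ inner ℝ (w - u) (coneDir i)}

/-- The size `|T_{u,w}|` of the canonical triangle, i.e. the length of each of the two sides
incident to the apex `u`. -/
noncomputable def triangleSize (u w : Plane) (i : Fin 5) : ℝ :=
  (inner ℝ (w - u) (coneDir i) : ℝ) / Real.cos (Real.pi / 5)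

open Real InnerProductGeometry
open scoped RealInnerProductSpace

section AngleGeometry

variable {V : Type*} [NormedAddCommGroup V] [InnerProductSpace ℝ V]

theorem norm_sub_lt_norm_of_angle_le {x y b : V} (hx : angle x b ≤ π / 10)
    (hy : angle y b < π / 5) (hyx : ⟪y, b⟫ ≤ ⟪x, b⟫) : ‖y - x‖ < ‖x‖ := by
  have hπ := pi_pos
  have hx0 : x ≠ 0 := by rintro rfl; rw [angle_zero_left] at hx; linarith
  have hy0 : y ≠ 0 := by rintro rfl; rw [angle_zero_left] at hy; linarith
  have hb0 : b ≠ 0 := by rintro rfl; rw [angle_zero_right] at hy; linarith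
  set α := angle x b
  set β := angle y b
  set γ := angle y x
  have hγ : γ ≤ α + β := by
    have := angle_le_angle_add_angle y b x
    rw [angle_comm b x] at this
    linarith
  have hα0 := angle_nonneg x b
  have hβ0 := angle_nonneg y b
  have hcosβ : 0 < cos β := cos_pos_of_mem_Ioo ⟨by linarith, by linarith⟩
  -- this is where the constants matter: `α + 2β < π/10 + 2π/5 = π/2`
  have hcos2 : 0 < cos (α + 2 * β) := cos_pos_of_mem_Ioo ⟨by linarith, by linarith⟩
  have hproj : ‖y‖ * cos β ≤ ‖x‖ * cos α := by
    rw [← cos_angle_mul_norm_mul_norm, ← cos_angle_mul_norm_mul_norm] at hyx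
    have hb := norm_pos_iff.2 hb0
    nlinarith
  have hγcos : cos (α + β) ≤ cos γ :=
    cos_le_cos_of_nonneg_of_le_pi (angle_nonneg y x) (by linarith) hγ
  have hprod : 2 * cos β * cos (α + β) = cos (α + 2 * β) + cos α := by
    have hadd := cos_add (α + β) β
    have hsub := cos_sub (α + β) β
    rw [show α + β + β = α + 2 * β by ring] at hadd
    rw [add_sub_cancel_right] at hsub
    linarith
  have hxpos := norm_pos_iff.2 hx0
  have hylt : ‖y‖ < 2 * ‖x‖ * cos γ := by
    refine lt_of_mul_lt_mul_right ?_ hcosβ.le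
    calc ‖y‖ * cos β ≤ ‖x‖ * cos α := hproj
      _ < ‖x‖ * (cos (α + 2 * β) + cos α) := by nlinarith
      _ = ‖x‖ * (2 * cos β * cos (α + β)) := by rw [hprod]
      _ ≤ ‖x‖ * (2 * cos β * cos γ) := by gcongr
      _ = 2 * ‖x‖ * cos γ * cos β := by ring
  have hsq : ‖y - x‖ ^ 2 < ‖x‖ ^ 2 := by
    rw [norm_sub_sq_real, ← cos_angle_mul_norm_mul_norm]
    have hypos := norm_pos_iff.2 hy0
    nlinarith
  exact lt_of_pow_lt_pow_left₀ 2 (norm_nonneg x) hsq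

end AngleGeometry

/-- The unit vector obtained by rotating `(0,1)` clockwise by `θ`, so that
`coneDir i = dirVec (i * (2 * π / 5))`. -/
def dirVec (θ : ℝ) : Plane := WithLp.toLp 2 ![sin θ, cos θ]

lemma inner_dirVec_dirVec (φ θ : ℝ) : ⟪dirVec φ, dirVec θ⟫ = cos (φ - θ) := by
  simp only [dirVec, PiLp.inner_apply, RCLike.inner_apply, ringHom_apply, Fin.sum_univ_two,
    Matrix.cons_val_zero, Matrix.cons_val_one, Matrix.cons_val_fin_one, cos_sub]
  ring

lemma norm_dirVec (θ : ℝ) : ‖dirVec θ‖ = 1 := by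
  rw [norm_eq_sqrt_real_inner, inner_dirVec_dirVec, sub_self, cos_zero, sqrt_one]

lemma angle_dirVec_dirVec {φ θ : ℝ} (h : |φ - θ| ≤ π) :
    angle (dirVec φ) (dirVec θ) = |φ - θ| := by
  rw [angle, inner_dirVec_dirVec, norm_dirVec, norm_dirVec, mul_one, div_one, ← cos_abs,
    arccos_cos (abs_nonneg _) h]

lemma exists_eq_norm_smul_dirVec (x : Plane) : ∃ φ, x = ‖x‖ • dirVec φ := by
  let z : ℂ := ⟨x 1, x 0⟩
  have hz : ‖z‖ = ‖x‖ := by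
    rw [Complex.norm_eq_sqrt_sq_add_sq, EuclideanSpace.norm_eq, Fin.sum_univ_two]
    simp [z, sq_abs, add_comm]
  refine ⟨z.arg, ?_⟩
  ext j
  fin_cases j
  · simp [dirVec, ← hz, Complex.norm_mul_sin_arg, z]
  · simp [dirVec, ← hz, Complex.norm_mul_cos_arg, z]

lemma exists_angle_dirVec_le {x : Plane} (hx : x ≠ 0) :
    ∃ k : ℤ, angle x (dirVec (k * (π / 5))) ≤ π / 10 := by
  obtain ⟨φ, hφ⟩ := exists_eq_norm_smul_dirVec x
  set k := round (φ / (π / 5))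
  have hπ := pi_pos
  have hk : |φ - k * (π / 5)| ≤ π / 10 := by
    have hround : |φ / (π / 5) - k| ≤ 1 / 2 := abs_sub_round _
    rw [show φ - k * (π / 5) = (φ / (π / 5) - k) * (π / 5) by field_simp, abs_mul,
      abs_of_pos (by positivity : (0 : ℝ) < π / 5)]
    nlinarith
  refine ⟨k, ?_⟩
  rw [hφ, angle_smul_left_of_pos _ _ (norm_pos_iff.2 hx), angle_dirVec_dirVec (by linarith)]
  exact hk

lemma dirVec_add_int_mul_pi (θ : ℝ) (n : ℤ) : dirVec (θ + n * π) = (-1 : ℝ) ^ n • dirVec θ := by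
  ext j
  fin_cases j <;> simp [dirVec, sin_add_int_mul_pi, cos_add_int_mul_pi]

lemma exists_coneDir_eq_or_eq_neg (k : ℤ) :
    ∃ i : Fin 5, dirVec (k * (π / 5)) = coneDir i ∨ dirVec (k * (π / 5)) = -coneDir i := by
  -- `i ≡ 3k (mod 5)` is the solution of `2i ≡ k (mod 5)`, so `k π/5 = i · 2π/5 + t π`
  set i : ℤ := 3 * k % 5
  set t : ℤ := (k - 2 * i) / 5
  have hk : (k : ℝ) * (π / 5) = i.toNat * (2 * π / 5) + t * π := by
    have hi : ((i.toNat : ℕ) : ℝ) = i := by exact_mod_cast Int.toNat_of_nonneg (by omega)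
    have hkit : k = 2 * i + 5 * t := by omega
    rw [hi, hkit]
    push_cast
    ring
  refine ⟨⟨i.toNat, by omega⟩, ?_⟩
  rw [hk, dirVec_add_int_mul_pi]
  rcases Int.even_or_odd t with ht | ht
  · left
    rw [ht.neg_one_zpow, one_smul]
    rfl
  · right
    rw [ht.neg_one_zpow, neg_one_smul]
    rfl

lemma exists_angle_coneDir_le {x : Plane} (hx : x ≠ 0) :
    ∃ i, angle x (coneDir i) ≤ π / 10 ∨ angle (-x) (coneDir i) ≤ π / 10 := by
  obtain ⟨k, hk⟩ := exists_angle_dirVec_le hx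
  obtain ⟨i, hi | hi⟩ := exists_coneDir_eq_or_eq_neg k
  · exact ⟨i, .inl (hi ▸ hk)⟩
  · refine ⟨i, .inr ?_⟩
    rwa [← neg_neg (coneDir i), ← hi, angle_neg_neg]

lemma mem_cone_of_angle_le {u v : Plane} {i : Fin 5} (h : angle (v - u) (coneDir i) ≤ π / 10) :
    v ∈ cone u i := by
  have hπ := pi_pos
  refine ⟨fun hvu => ?_, by linarith⟩
  rw [hvu, sub_self, angle_zero_left] at h
  linarith

lemma exists_isClosest {P : Set Plane} (hfin : P.Finite) {u v : Plane} {i : Fin 5} (hv : v ∈ P)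
    (hvc : v ∈ cone u i) : ∃ w, isClosest P u i w := by
  obtain ⟨w, ⟨hwP, hwc⟩, hmin⟩ := Set.exists_min_image (P ∩ cone u i)
    (fun p => ⟪p - u, coneDir i⟫) (hfin.inter_of_left _) ⟨v, hv, hvc⟩
  exact ⟨w, hwP, hwc, fun p hp hpc => hmin p ⟨hp, hpc⟩⟩

lemma isClosest.dist_lt {P : Set Plane} {u v w : Plane} {i : Fin 5} (hw : isClosest P u i w)
    (hv : v ∈ P) (h : angle (v - u) (coneDir i) ≤ π / 10) : dist w v < dist u v := by
  obtain ⟨-, hwc, hmin⟩ := hw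
  have hlt := norm_sub_lt_norm_of_angle_le h hwc.2 (hmin v hv (mem_cone_of_angle_le h))
  rwa [sub_sub_sub_cancel_right, ← dist_eq_norm, ← dist_eq_norm, dist_comm v] at hlt

lemma exists_thetaGraph_adj_dist_lt {P : Set Plane} (hfin : P.Finite) {u v : Plane} {i : Fin 5}
    (hu : u ∈ P) (hv : v ∈ P) (h : angle (v - u) (coneDir i) ≤ π / 10) :
    ∃ w ∈ P, (thetaGraph P).Adj u w ∧ dist w v < dist u v := by
  obtain ⟨w, hw⟩ := exists_isClosest hfin hv (mem_cone_of_angle_le h)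
  exact ⟨w, hw.1, ⟨hu, hw.1, (hw.2.1.1).symm, .inl ⟨i, hw⟩⟩, hw.dist_lt hv h⟩

theorem SimpleGraph.preconnected_of_exists_adj_lt {V : Type*} [Finite V] {G : SimpleGraph V}
    (d : V → V → ℝ)
    (h : ∀ u v, u ≠ v → (∃ w, G.Adj u w ∧ d w v < d u v) ∨ ∃ w, G.Adj v w ∧ d w u < d u v) :
    G.Preconnected := by
  intro u v
  have hwf := Finite.wellFounded_of_trans_of_irrefl (InvImage (· < ·) fun p : V × V => d p.1 p.2)
  refine hwf.induction (C := fun p => G.Reachable p.1 p.2) (u, v) ?_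
  rintro ⟨a, b⟩ ih
  by_cases hab : a = b
  · exact hab ▸ .refl a
  rcases h a b hab with ⟨w, haw, hw⟩ | ⟨w, hbw, hw⟩
  · exact haw.reachable.trans (ih (w, b) hw)
  · exact (hbw.reachable.trans (ih (w, a) hw)).symm

theorem theta5_connected_general (P : Set Plane) (hfin : P.Finite)
    (hne : P.Nonempty) : ((thetaGraph P).induce P).Connected := by
  have := hfin.to_subtype
  have := hne.to_subtype
  refine (SimpleGraph.connected_iff _).2 ⟨SimpleGraph.preconnected_of_exists_adj_lt dist ?_, this⟩
  intro u v huv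
  have hvu : (v : Plane) - u ≠ 0 := sub_ne_zero.2 (Subtype.coe_ne_coe.2 huv.symm)
  obtain ⟨i, hi | hi⟩ := exists_angle_coneDir_le hvu
  · obtain ⟨w, hwP, hadj, hw⟩ := exists_thetaGraph_adj_dist_lt hfin u.2 v.2 hi
    exact .inl ⟨⟨w, hwP⟩, hadj, hw⟩
  · rw [neg_sub] at hi
    obtain ⟨w, hwP, hadj, hw⟩ := exists_thetaGraph_adj_dist_lt hfin v.2 u.2 hi
    exact .inr ⟨⟨w, hwP⟩, hadj, by rwa [dist_comm (v : Plane)] at hw⟩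

/-- For every finite nonempty set `P` of points in the plane in general position,
the θ₅-graph of `P` is a connected graph. -/
theorem theta5_connected (P : Set Plane) (hfin : P.Finite) (hgp : GeneralPosition P)
    (hne : P.Nonempty) : ((thetaGraph P).induce P).Connected :=
  theta5_connected_general P hfin hne
end
end

section
/- Let u, w ∈ ℝ² be distinct points with w in the cone C₀ᵘ, and let α ∈ (0, π/5) be the clockwise angle from the direction (0,1) to the vector w − u. If α < π/10, then |T_{w,u}| < |T_{u,w}|, i.e. the canonical triangle of the reversed pair is strictly smaller. -/
noncomputable section

/-! The bisector of `C₃` is the direction at clockwise angle `6π/5 = π + π/5`, so for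
`w - u = r (sin α, cos α)` the two sizes are `r cos (α - π/5)` and `r cos α` up to the common
factor `1 / cos (π/5)`. Since `α < π/10`, the angle `α` is closer to `0` than to `π/5`, and
cosine is decreasing on `[0, π]`. -/

open Real

lemma inner_sin_cos_sin_cos (a b : ℝ) :
    inner ℝ (WithLp.toLp 2 ![sin a, cos a] : Plane) (WithLp.toLp 2 ![sin b, cos b]) =
      cos (a - b) := by
  simp only [PiLp.inner_apply, Fin.sum_univ_two, Matrix.cons_val_zero,
    Matrix.cons_val_one, RCLike.inner_apply, conj_trivial, cos_sub]
  ring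

lemma triangleSize_lt_triangleSize_iff (u w u' w' : Plane) (i j : Fin 5) :
    triangleSize u w i < triangleSize u' w' j ↔
      inner ℝ (w - u) (coneDir i) < inner ℝ (w' - u') (coneDir j) :=
  div_lt_div_iff_of_pos_right <| cos_pos_of_mem_Ioo ⟨by linarith [pi_pos], by linarith [pi_pos]⟩

lemma cos_sub_pi_div_five_lt_cos {α : ℝ} (h0 : 0 ≤ α) (h : α < π / 10) :
    cos (α - π / 5) < cos α := by
  rw [← cos_neg, neg_sub]
  exact cos_lt_cos_of_nonneg_of_le_pi h0 (by linarith [pi_pos]) (by linarith)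

/-- If `w` lies in `C₀ᵘ` at clockwise angle `α ∈ (0, π/5)` from the upward vertical
direction and `α < π/10`, then the reversed canonical triangle is strictly smaller:
`|T_{w,u}| < |T_{u,w}|`. -/
theorem reversed_triangle_smaller (u w : Plane) (α r : ℝ)
    (hα : α ∈ Set.Ioo 0 (Real.pi / 5)) (hα10 : α < Real.pi / 10) (hr : 0 < r)
    (hw : w - u = r • (WithLp.toLp 2 ![Real.sin α, Real.cos α] : Plane)) :
    triangleSize w u 3 < triangleSize u w 0 := by
  rw [triangleSize_lt_triangleSize_iff, ← neg_sub w u, hw]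
  simp only [coneDir, inner_neg_left, inner_smul_left, inner_sin_cos_sin_cos]
  have hcos_three : cos (α - ((3 : Fin 5) : ℕ) * (2 * π / 5)) = -cos (α - π / 5) := by
    rw [← cos_sub_pi, show ((3 : Fin 5) : ℕ) = 3 from rfl]
    ring_nf
  simp only [hcos_three, Fin.val_zero, Nat.cast_zero, zero_mul, sub_zero, RCLike.conj_to_real]
  simpa using mul_lt_mul_of_pos_left (cos_sub_pi_div_five_lt_cos hα.1.le hα10) hr
end
end

section
/- Let P be a finite set of points in the plane in general position and let u, w ∈ P be distinct. If the canonical triangle T_{u,w} has minimal size among the canonical triangles T_{p,q} over all ordered pairs of distinct points p, q ∈ P, then u and w are adjacent in the θ₅-graph of P. -/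
noncomputable section

lemma triangleSize_le_triangleSize_iff {u w u' w' : Plane} {i j : Fin 5} :
    triangleSize u w i ≤ triangleSize u' w' j ↔
      (inner ℝ (w - u) (coneDir i) : ℝ) ≤ inner ℝ (w' - u') (coneDir j) :=
  div_le_div_iff_of_pos_right <|
    Real.cos_pos_of_mem_Ioo ⟨by linarith [Real.pi_pos], by linarith [Real.pi_pos]⟩

theorem minimal_triangle_implies_edge_general (P : Set Plane) (u w : Plane) (hu : u ∈ P) (hw : w ∈ P)
    (huw : u ≠ w) (i : Fin 5) (hc : w ∈ cone u i)
    (hmin : ∀ p ∈ P, ∀ q ∈ P, p ≠ q → ∀ j : Fin 5, q ∈ cone p j →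
      triangleSize u w i ≤ triangleSize p q j) :
    (thetaGraph P).Adj u w :=
  ⟨hu, hw, huw, Or.inl ⟨i, hw, hc, fun p hp hpu =>
    triangleSize_le_triangleSize_iff.mp (hmin u hu p hp hpu.1.symm i hpu)⟩⟩

/-- If the canonical triangle `T_{u,w}` has minimal size among the canonical
triangles of all ordered pairs of distinct points of `P`, then `u` and `w` are adjacent in the
θ₅-graph of `P`. -/
theorem minimal_triangle_implies_edge (P : Set Plane) (hfin : P.Finite)
    (hgp : GeneralPosition P) (u w : Plane) (hu : u ∈ P) (hw : w ∈ P) (huw : u ≠ w)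
    (i : Fin 5) (hc : w ∈ cone u i)
    (hmin : ∀ p ∈ P, ∀ q ∈ P, p ≠ q → ∀ j : Fin 5, q ∈ cone p j →
      triangleSize u w i ≤ triangleSize p q j) :
    (thetaGraph P).Adj u w :=
  minimal_triangle_implies_edge_general P u w hu hw huw i hc hmin
end
end

section
/- The real number c = 2(2 + √5) satisfies 1/cos(π/5) + c · (sin(3π/5)/sin(3π/10)) · tan(π/5) = c; equivalently, 1 / (cos(π/5) − cos(π/10) · tan(π/5)) = 2(2 + √5). -/
/-- The constant `c = 2(2 + √5)` satisfies
`1/cos(π/5) + c · (sin(3π/5)/sin(3π/10)) · tan(π/5) = c`; equivalently,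
`1/(cos(π/5) − cos(π/10) · tan(π/5)) = 2(2 + √5)`. -/
theorem c_fixed_point :
    1 / Real.cos (Real.pi / 5) +
        2 * (2 + Real.sqrt 5) * (Real.sin (3 * Real.pi / 5) / Real.sin (3 * Real.pi / 10)) *
          Real.tan (Real.pi / 5) = 2 * (2 + Real.sqrt 5) ∧
    1 / (Real.cos (Real.pi / 5) - Real.cos (Real.pi / 10) * Real.tan (Real.pi / 5)) =
      2 * (2 + Real.sqrt 5) := by
  have hc : Real.cos (Real.pi / 5) = (1 + Real.sqrt 5) / 4 := Real.cos_pi_div_five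
  have h5 : Real.sqrt 5 ^ 2 = 5 := Real.sq_sqrt (by norm_num)
  have h5pos : (2:ℝ) < Real.sqrt 5 := by
    nlinarith [Real.sqrt_nonneg 5]
  have hcpos : 0 < Real.cos (Real.pi / 5) := by rw [hc]; nlinarith
  have hspos : 0 < Real.sin (Real.pi / 5) := by
    apply Real.sin_pos_of_pos_of_lt_pi
    · positivity
    · nlinarith [Real.pi_pos]
  have hsin35 : Real.sin (3 * Real.pi / 5)
      = 2 * Real.sin (Real.pi / 5) * Real.cos (Real.pi / 5) := by
    have h : (3:ℝ) * Real.pi / 5 = Real.pi - 2 * (Real.pi / 5) := by ring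
    rw [h, Real.sin_pi_sub, Real.sin_two_mul]
  have hsin310 : Real.sin (3 * Real.pi / 10) = Real.cos (Real.pi / 5) := by
    have h : (3:ℝ) * Real.pi / 10 = Real.pi / 2 - Real.pi / 5 := by ring
    rw [h, Real.sin_pi_div_two_sub]
  have hcos10 : Real.cos (Real.pi / 10)
      = 2 * Real.sin (Real.pi / 5) * Real.cos (Real.pi / 5) := by
    have h : Real.pi / 10 = Real.pi / 2 - 2 * (Real.pi / 5) := by ring
    rw [h, Real.cos_pi_div_two_sub, Real.sin_two_mul]
  have hsq : Real.sin (Real.pi / 5) ^ 2 = 1 - Real.cos (Real.pi / 5) ^ 2 :=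
    by nlinarith [Real.sin_sq_add_cos_sq (Real.pi/5)]
  have htan : Real.tan (Real.pi / 5)
      = Real.sin (Real.pi / 5) / Real.cos (Real.pi / 5) := Real.tan_eq_sin_div_cos _
  have hne : Real.cos (Real.pi / 5) ≠ 0 := ne_of_gt hcpos
  constructor
  · rw [hsin35, hsin310, htan]
    field_simp
    nlinarith [hsq, h5, hc, sq_nonneg (Real.sin (Real.pi / 5))]
  · rw [hcos10, htan]
    have hden : Real.cos (Real.pi / 5)
        - 2 * Real.sin (Real.pi / 5) * Real.cos (Real.pi / 5) *
          (Real.sin (Real.pi / 5) / Real.cos (Real.pi / 5))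
        = (Real.sqrt 5 - 2) / 2 := by
      field_simp
      nlinarith [hsq, h5, hc]
    rw [hden]
    rw [div_eq_iff (by nlinarith)]
    nlinarith
end

section
/- 1/cos(π/5) + 4·sin(π/5)·tan(π/5) + (sin(π/10)/sin(3π/5))·tan(π/5) + (sin(3π/10)/sin(3π/5))·tan(π/5) = (11√5 − 17)/2. -/
open Real

/-! With `c = cos (π/5)`, the angles `π/10`, `3π/10`, `3π/5` are complementary or supplementary
to `2π/5` and `π/5`, so every term is a rational function of `c`; since `1 / c = √5 - 1`, the
sum collapses to `(11√5 - 17)/2`. -/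

lemma div_sin_two_mul_mul_tan (a θ : ℝ) (hs : sin θ ≠ 0) :
    a / sin (2 * θ) * tan θ = a / (2 * cos θ ^ 2) := by
  rw [sin_two_mul, tan_eq_sin_div_cos]
  field_simp

lemma sin_mul_tan (θ : ℝ) : sin θ * tan θ = (1 - cos θ ^ 2) / cos θ := by
  rw [tan_eq_sin_div_cos, ← sin_sq, mul_div_assoc', sq]

/-- The total length of the five-edge lower-bound path equals `(11√5 − 17)/2`:
`1/cos(π/5) + 4·sin(π/5)·tan(π/5) + (sin(π/10)/sin(3π/5))·tan(π/5)
  + (sin(3π/10)/sin(3π/5))·tan(π/5) = (11√5 − 17)/2`. -/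
theorem lower_bound_path_length :
    1 / Real.cos (Real.pi / 5) + 4 * Real.sin (Real.pi / 5) * Real.tan (Real.pi / 5) +
        Real.sin (Real.pi / 10) / Real.sin (3 * Real.pi / 5) * Real.tan (Real.pi / 5) +
        Real.sin (3 * Real.pi / 10) / Real.sin (3 * Real.pi / 5) * Real.tan (Real.pi / 5) =
      (11 * Real.sqrt 5 - 17) / 2 := by
  have h10 : sin (π / 10) = cos (2 * (π / 5)) := by rw [← sin_pi_div_two_sub]; ring_nf
  have h310 : sin (3 * π / 10) = cos (π / 5) := by rw [← sin_pi_div_two_sub]; ring_nf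
  have h35 : sin (3 * π / 5) = sin (2 * (π / 5)) := by rw [← sin_pi_sub]; ring_nf
  have hs : sin (π / 5) ≠ 0 := (sin_pos_of_pos_of_lt_pi (by positivity) (by linarith [pi_pos])).ne'
  rw [h10, h310, h35, div_sin_two_mul_mul_tan _ _ hs, div_sin_two_mul_mul_tan _ _ hs, mul_assoc,
    sin_mul_tan, cos_two_mul, cos_pi_div_five]
  have h5 : √5 ^ 2 = 5 := sq_sqrt (by norm_num)
  field_simp
  linear_combination (-13 * √5 - 9) * h5
end
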